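/- Let G and H be generalized cospectral simple graphs on n vertices with adjacency matrices A and B and common characteristic polynomial x^n + c_1 x^{n−1} + ··· + c_n. Define M(G) = A^{⌈n/2⌉} + c_2 A^{⌈(n−2)/2⌉} + ··· + c_{n−2}A + c_n I if n is even (respectively M(G) = A^{⌈n/2⌉} + c_2 A^{⌈(n−2)/2⌉} + ··· + c_{n−3}A² + c_{n−1}A if n is odd), and define M(H) in the same way using B. Then M(G)e ≡ 0 (mod 2) and M(H)e ≡ 0 (mod 2). -/

import Mathlib

open Matrix Polynomial
open scoped Classical

noncomputable section

/-- The adjacency matrix of a simple graph on `Fin n`, with integer entries. -/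
def adjMat (n : ℕ) (G : SimpleGraph (Fin n)) : Matrix (Fin n) (Fin n) ℤ :=
  Matrix.of fun i j => if G.Adj i j then 1 else 0

/-- The walk matrix `W = [e, Ae, ..., A^{n-1}e]` of a matrix `A`. -/
def walkMat {n : ℕ} (A : Matrix (Fin n) (Fin n) ℤ) : Matrix (Fin n) (Fin n) ℤ :=
  Matrix.of fun i j => ((A ^ (j : ℕ)) *ᵥ fun _ => (1 : ℤ)) i

/-- Two graphs are generalized cospectral if they are cospectral and so are their complements. -/
def genCospectral {n : ℕ} (G H : SimpleGraph (Fin n)) : Prop :=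
  (adjMat n G).charpoly = (adjMat n H).charpoly ∧
  (adjMat n Gᶜ).charpoly = (adjMat n Hᶜ).charpoly

/-- Given the coefficients `c i` of the characteristic polynomial, the matrix
`M = A^{⌈n/2⌉} + c₂A^{⌈(n-2)/2⌉} + ⋯ + c_{n-2}A + cₙI` when `n` is even (resp.
`M = A^{⌈n/2⌉} + c₂A^{⌈(n-2)/2⌉} + ⋯ + c_{n-3}A² + c_{n-1}A` when `n` is odd): the `j`-th
summand is `c_{2j} • A^{⌈(n-2j)/2⌉}` for `j = 0, 1, …, ⌊n/2⌋` (with `c₀ = 1`). -/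
def Mhalf {n : ℕ} (A : Matrix (Fin n) (Fin n) ℤ) (c : ℕ → ℤ) : Matrix (Fin n) (Fin n) ℤ :=
  ∑ j ∈ Finset.range (n / 2 + 1), c (2 * j) • A ^ ((n - 2 * j + 1) / 2)

/-! Reduce modulo 2, where `M = h(A)` for a polynomial `h` and `A` is symmetric with zero
diagonal. Over `𝔽₂` squaring is the Frobenius, so `h² = h(X²) = X^(n mod 2) · q` with `q` the part
of the characteristic polynomial `p` of degrees `≡ n (mod 2)`. Since `p(A) = 0`, the matrix `M²`
is a combination of odd powers of `A`, and these have zero diagonal: `(A^(2m+1))ₖₖ = vᵀAv` for a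
row `v` of `A^m`, and a symmetric zero-diagonal form is alternating in characteristic 2. Finally
`(Me)ₖ = Σⱼ Mₖⱼ = Σⱼ Mₖⱼ² = (M²)ₖₖ` because `M` is symmetric. -/

open Finset

section CharTwo

variable {ι R : Type*} [Fintype ι] [CommRing R] [CharP R 2]

theorem dotProduct_mulVec_self_eq_zero_of_charTwo {S : Matrix ι ι R} (hS : S.IsSymm)
    (hd : S.diag = 0) (v : ι → R) : v ⬝ᵥ (S *ᵥ v) = 0 := by
  simp only [dotProduct, mulVec, mul_sum, ← sum_product']
  refine sum_involution (fun a _ => a.swap) (fun a _ => ?_) (fun a _ hne hswap => ?_)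
    (fun a _ => mem_univ _) (fun a _ => Prod.swap_swap a)
  · rw [Prod.fst_swap, Prod.snd_swap, hS.apply a.1 a.2]
    convert CharTwo.add_self_eq_zero (v a.1 * (S a.1 a.2 * v a.2)) using 2
    ring
  · exact hne (by rw [show a.1 = a.2 from congrArg Prod.snd hswap]; simp [← diag_apply, hd])

theorem diag_pow_eq_zero_of_odd [DecidableEq ι] {S : Matrix ι ι R} (hS : S.IsSymm)
    (hd : S.diag = 0) {e : ℕ} (he : Odd e) (k : ι) : (S ^ e) k k = 0 := by
  obtain ⟨m, rfl⟩ := he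
  have hT : (S ^ m).IsSymm := hS.pow m
  calc (S ^ (2 * m + 1)) k k = (S ^ m * S * S ^ m) k k := by
        rw [← pow_succ, ← pow_add, two_mul, add_right_comm]
    _ = (fun j => (S ^ m) k j) ⬝ᵥ (S *ᵥ fun j => (S ^ m) k j) := by
        simp only [mul_apply, dotProduct, mulVec, sum_mul, mul_sum]
        rw [sum_comm]
        refine sum_congr rfl fun a _ => sum_congr rfl fun b _ => ?_
        rw [hT.apply b k]; ring
    _ = 0 := dotProduct_mulVec_self_eq_zero_of_charTwo hS hd _

end CharTwo

theorem Matrix.IsSymm.aeval {ι R : Type*} [Fintype ι] [DecidableEq ι] [CommSemiring R]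
    {S : Matrix ι ι R} (hS : S.IsSymm) (q : R[X]) : (aeval S q).IsSymm := by
  induction q using Polynomial.induction_on' with
  | add p q hp hq => rw [map_add]; exact hp.add hq
  | monomial k a => rw [aeval_monomial, ← Algebra.smul_def]; exact (hS.pow k).smul a

def halfPoly {R : Type*} [CommSemiring R] (n : ℕ) (p : R[X]) : R[X] :=
  ∑ j ∈ range (n / 2 + 1), C (p.coeff (n - 2 * j)) * X ^ ((n - 2 * j + 1) / 2)

theorem halfPoly_map {R S : Type*} [CommSemiring R] [CommSemiring S] (f : R →+* S) (n : ℕ)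
    (p : R[X]) : (halfPoly n p).map f = halfPoly n (p.map f) := by
  simp [halfPoly, Polynomial.map_sum]

theorem halfPoly_sq (n : ℕ) (p : (ZMod 2)[X]) :
    halfPoly n p ^ 2 =
      ∑ i ∈ (range (n + 1)).filter (fun i => i % 2 = n % 2), C (p.coeff i) * X ^ (i + n % 2) := by
  rw [← ZMod.expand_card, halfPoly, map_sum]
  refine sum_nbij' (fun j => n - 2 * j) (fun i => (n - i) / 2) ?_ ?_ ?_ ?_ ?_
  any_goals (intro j hj; simp only [mem_range, mem_filter] at hj ⊢; omega)
  intro j hj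
  rw [mem_range] at hj
  rw [map_mul, expand_C, map_pow, expand_X, ← pow_mul]
  congr 2
  omega

theorem mulVec_one_apply_eq_mul_self_apply {ι : Type*} [Fintype ι] {M : Matrix ι ι (ZMod 2)}
    (hM : M.IsSymm) (k : ι) : (M *ᵥ fun _ => 1) k = (M * M) k k := by
  simp only [mulVec, dotProduct, mul_apply, mul_one, hM.apply k]
  exact sum_congr rfl fun j _ => (ZMod.pow_card (M k j)).symm.trans (sq _)

theorem diag_aeval_halfPoly_sq_eq_zero {ι : Type*} [Fintype ι] [DecidableEq ι]
    {S : Matrix ι ι (ZMod 2)} (hS : S.IsSymm) (hd : S.diag = 0) {n : ℕ} {p : (ZMod 2)[X]}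
    (hp : p.natDegree ≤ n) (hpS : aeval S p = 0) (k : ι) :
    (aeval S (halfPoly n p ^ 2)) k k = 0 := by
  have hXp : X ^ (n % 2) * p = ∑ i ∈ range (n + 1), C (p.coeff i) * X ^ (i + n % 2) := by
    conv_lhs => rw [p.as_sum_range_C_mul_X_pow' (Nat.lt_succ_of_le hp), mul_sum]
    exact sum_congr rfl fun i _ => by ring
  have hsplit : halfPoly n p ^ 2 + X ^ (n % 2) * p =
      ∑ i ∈ (range (n + 1)).filter (fun i => ¬ i % 2 = n % 2),
        C (p.coeff i) * X ^ (i + n % 2) := by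
    rw [hXp, ← sum_filter_add_sum_filter_not _ (fun i => i % 2 = n % 2), halfPoly_sq,
      ← add_assoc, CharTwo.add_self_eq_zero, zero_add]
  have hodd : aeval S (halfPoly n p ^ 2) = aeval S (∑ i ∈ (range (n + 1)).filter
      (fun i => ¬ i % 2 = n % 2), C (p.coeff i) * X ^ (i + n % 2)) := by
    rw [← hsplit, map_add, map_mul, hpS, mul_zero, add_zero]
  rw [hodd, map_sum, Matrix.sum_apply]
  refine sum_eq_zero fun i hi => ?_
  rw [mem_filter] at hi
  rw [map_mul, map_pow, aeval_C, aeval_X, Algebra.algebraMap_eq_smul_one, smul_one_mul,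
    Matrix.smul_apply, diag_pow_eq_zero_of_odd hS hd (Nat.odd_iff.mpr (by omega)) k, smul_zero]

theorem Mhalf_eq_aeval_halfPoly {n : ℕ} (A : Matrix (Fin n) (Fin n) ℤ) (p : ℤ[X]) :
    Mhalf A (fun i => p.coeff (n - i)) = aeval A (halfPoly n p) := by
  simp only [Mhalf, halfPoly, map_sum, map_mul, map_pow, aeval_C, aeval_X, Algebra.smul_def]

theorem two_dvd_Mhalf_charpoly_mulVec_one {n : ℕ} {A : Matrix (Fin n) (Fin n) ℤ}
    (hA : A.IsSymm) (hd : A.diag = 0) (k : Fin n) :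
    (2 : ℤ) ∣ ((Mhalf A fun i => A.charpoly.coeff (n - i)) *ᵥ fun _ => (1 : ℤ)) k := by
  set f := Int.castRingHom (ZMod 2)
  set S := A.map f
  have hdS : S.diag = 0 := by rw [diag_map, hd]; rfl
  have hM : (Mhalf A fun i => A.charpoly.coeff (n - i)).map f =
      aeval S (halfPoly n S.charpoly) := by
    rw [Mhalf_eq_aeval_halfPoly, ← RingHom.mapMatrix_apply,
      map_aeval_eq_aeval_map (φ := f) (Subsingleton.elim _ _), halfPoly_map, ← charpoly_map]
    rfl
  have hdeg : S.charpoly.natDegree ≤ n := by rw [charpoly_natDegree_eq_dim, Fintype.card_fin]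
  refine (ZMod.intCast_zmod_eq_zero_iff_dvd _ 2).mp ?_
  rw [← eq_intCast f, RingHom.map_mulVec, hM, Function.comp_def, map_one,
    mulVec_one_apply_eq_mul_self_apply ((hA.map f).aeval _), ← pow_two, ← map_pow]
  exact diag_aeval_halfPoly_sq_eq_zero (hA.map f) hdS hdeg (aeval_self_charpoly S) k

/-- Corollary 4: for generalized cospectral graphs `G` and `H` with common
characteristic polynomial, the matrices `M(G)` and `M(H)`, built from the even-indexed
coefficients of the common characteristic polynomial, satisfy `M(G)e ≡ 0 (mod 2)` and
`M(H)e ≡ 0 (mod 2)`. -/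
theorem stmt19 (n : ℕ) (G H : SimpleGraph (Fin n)) (hGH : genCospectral G H) :
    (∀ k, (2 : ℤ) ∣
      ((Mhalf (adjMat n G) (fun i => (adjMat n G).charpoly.coeff (n - i))) *ᵥ
        fun _ => (1 : ℤ)) k) ∧
    (∀ k, (2 : ℤ) ∣
      ((Mhalf (adjMat n H) (fun i => (adjMat n G).charpoly.coeff (n - i))) *ᵥ
        fun _ => (1 : ℤ)) k) := by
  have hdvd (G' : SimpleGraph (Fin n)) (k : Fin n) :=
    two_dvd_Mhalf_charpoly_mulVec_one (A := adjMat n G')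
      (G'.isSymm_adjMatrix (α := ℤ)) (G'.diag_adjMatrix (α := ℤ)) k
  exact ⟨hdvd G, by rw [hGH.1]; exact hdvd H⟩
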